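/- arXiv:2212.02267 — 4 statements merged into one kernel-verified Lean document; each statement's English description precedes it below -/
import Mathlib

section
/- For every unit vector (a, b) ∈ ℂ² (i.e., |a|² + |b|² = 1) there exist real numbers γ, φ, θ with 0 ≤ θ ≤ π, 0 ≤ φ < 2π, (θ = 0 → φ = 0), and (θ = π → φ = 0), such that a = e^{iγ}·cos(θ/2) and b = e^{iγ}·e^{iφ}·sin(θ/2); that is, up to a global phase, every qubit state is captured by the symQV qubit encoding with its period constraints. -/
/-!
Write both amplitudes in polar form: `a = e^{iγ} |a|` and `b = e^{iγ} e^{iφ} |b|`, with `γ` the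
argument of `a` and `φ` the phase difference reduced to `[0, 2π)`. If one amplitude vanishes its
phase is arbitrary, so `γ` is taken from the other one and `φ = 0`, as the constraints at
`θ = 0` and `θ = π` demand. The moduli lie on the unit quarter circle, hence equal
`(cos (θ/2), sin (θ/2))` for `θ = 2 arccos |a| ∈ [0, π]`.
-/

open Complex

lemma exp_toIcoMod_mul_I (c x : ℝ) :
    exp (toIcoMod Real.two_pi_pos c x * I) = exp (x * I) := by
  rw [toIcoMod]
  push_cast
  exact exp_mul_I_periodic.sub_zsmul_eq _

lemma exp_arg_mul_I_mul_norm (z : ℂ) : exp (arg z * I) * ‖z‖ = z := by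
  rw [mul_comm, norm_mul_exp_arg_mul_I]

lemma exists_global_and_relative_phase (a b : ℂ) :
    ∃ γ φ : ℝ, 0 ≤ φ ∧ φ < 2 * Real.pi ∧ (a = 0 ∨ b = 0 → φ = 0) ∧
      a = exp (γ * I) * ‖a‖ ∧ b = exp (γ * I) * exp (φ * I) * ‖b‖ := by
  by_cases ha : a = 0
  · refine ⟨arg b, 0, le_rfl, Real.two_pi_pos, fun _ => rfl, by simp [ha], ?_⟩
    simpa using (exp_arg_mul_I_mul_norm b).symm
  by_cases hb : b = 0
  · exact ⟨arg a, 0, le_rfl, Real.two_pi_pos, fun _ => rfl,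
      (exp_arg_mul_I_mul_norm a).symm, by simp [hb]⟩
  obtain ⟨hφ₀, hφ₁⟩ := toIcoMod_mem_Ico' Real.two_pi_pos (arg b - arg a)
  refine ⟨arg a, toIcoMod Real.two_pi_pos 0 (arg b - arg a), hφ₀, hφ₁, by simp [ha, hb],
    (exp_arg_mul_I_mul_norm a).symm, ?_⟩
  rw [exp_toIcoMod_mul_I, ← exp_add, ← add_mul, ← ofReal_add, add_sub_cancel,
    exp_arg_mul_I_mul_norm]

lemma exists_half_angle_of_sq_add_sq_eq_one {r s : ℝ} (hr : 0 ≤ r) (hs : 0 ≤ s)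
    (h : r ^ 2 + s ^ 2 = 1) :
    ∃ θ, 0 ≤ θ ∧ θ ≤ Real.pi ∧ Real.cos (θ / 2) = r ∧ Real.sin (θ / 2) = s := by
  have hr₁ : r ≤ 1 := by nlinarith
  refine ⟨2 * Real.arccos r, by linarith [Real.arccos_nonneg r],
    by linarith [Real.arccos_le_pi_div_two.2 hr], ?_, ?_⟩
  · rw [mul_div_cancel_left₀ _ two_ne_zero, Real.cos_arccos (by linarith) hr₁]
  · rw [mul_div_cancel_left₀ _ two_ne_zero, Real.sin_arccos, ← h, add_sub_cancel_left,
      Real.sqrt_sq hs]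

/-- Up to a global phase `e^{iγ}`, every qubit state (unit vector in ℂ²) is captured
by the symQV qubit encoding with its period constraints. -/
theorem symQV_qubit_encoding_surjective (a b : ℂ)
    (h : ‖a‖ ^ 2 + ‖b‖ ^ 2 = 1) :
    ∃ γ φ θ : ℝ,
      0 ≤ θ ∧ θ ≤ Real.pi ∧ 0 ≤ φ ∧ φ < 2 * Real.pi ∧
      (θ = 0 → φ = 0) ∧ (θ = Real.pi → φ = 0) ∧
      a = Complex.exp (γ * Complex.I) * Real.cos (θ / 2) ∧
      b = Complex.exp (γ * Complex.I) * Complex.exp (φ * Complex.I) * Real.sin (θ / 2) := by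
  obtain ⟨γ, φ, hφ₀, hφ₁, hφ_zero, ha, hb⟩ := exists_global_and_relative_phase a b
  obtain ⟨θ, hθ₀, hθ₁, hcos, hsin⟩ :=
    exists_half_angle_of_sq_add_sq_eq_one (norm_nonneg a) (norm_nonneg b) h
  refine ⟨γ, φ, θ, hθ₀, hθ₁, hφ₀, hφ₁, fun hθ => hφ_zero (Or.inr ?_),
    fun hθ => hφ_zero (Or.inl ?_), hcos ▸ ha, hsin ▸ hb⟩
  · rw [← norm_eq_zero, ← hsin, hθ, zero_div, Real.sin_zero]
  · rw [← norm_eq_zero, ← hcos, hθ, Real.cos_pi_div_two]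
end

section
/- Let U be a 2×2 complex matrix and n ≥ 1, and let C(U) be the multi-controlled gate with n control qubits: the 2^n·2 × 2^n·2 complex matrix, indexed by Fin (2^n) × Fin 2, defined by C(U)((x,i),(y,j)) = 0 if x ≠ y, = U(i,j) if x = y = 2^n − 1 (all controls 1), and = (if i = j then 1 else 0) otherwise. Then for every basis index x : Fin (2^n) and every vector v : Fin 2 → ℂ: C(U)·(e_x ⊗ v) = e_x ⊗ v if x ≠ 2^n − 1, and C(U)·(e_x ⊗ v) = e_x ⊗ (U·v) if x = 2^n − 1; that is, the symQV multi-control direct mapping agrees with the matrix encoding when all control qubits are in computational basis states. -/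
open Matrix

/-- Standard basis vector at index `a`. -/
def stdBasis {α : Type*} [DecidableEq α] (a : α) : α → ℂ := fun i => if i = a then 1 else 0

/-- Kronecker product of a control-register vector and a single-qubit vector. -/
def kronC {α : Type*} (u : α → ℂ) (v : Fin 2 → ℂ) : α × Fin 2 → ℂ := fun p => u p.1 * v p.2

/-- The index of the all-ones control pattern, `2^n − 1`. -/
def allOnes (n : ℕ) : Fin (2 ^ n) := ⟨2 ^ n - 1, Nat.sub_lt (by positivity) one_pos⟩

/-- The multi-controlled gate `C(U)` with `n` control qubits. -/
def ctrlGate (n : ℕ) (U : Matrix (Fin 2) (Fin 2) ℂ) :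
    Matrix (Fin (2 ^ n) × Fin 2) (Fin (2 ^ n) × Fin 2) ℂ :=
  Matrix.of fun p q =>
    if p.1 ≠ q.1 then 0
    else if p.1 = allOnes n then U p.2 q.2
    else if p.2 = q.2 then 1 else 0

/-- The symQV multi-control direct mapping agrees with the matrix encoding when
all control qubits are in computational basis states. -/
theorem multi_control_direct_mapping_agrees (n : ℕ) (hn : 1 ≤ n)
    (U : Matrix (Fin 2) (Fin 2) ℂ) (x : Fin (2 ^ n)) (v : Fin 2 → ℂ) :
    (x ≠ allOnes n → (ctrlGate n U).mulVec (kronC (stdBasis x) v) = kronC (stdBasis x) v) ∧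
    (x = allOnes n →
      (ctrlGate n U).mulVec (kronC (stdBasis x) v) = kronC (stdBasis x) (U.mulVec v)) := by
  constructor
  · intro hx
    funext p
    obtain ⟨py, pi⟩ := p
    simp only [mulVec, dotProduct, ctrlGate, kronC, _root_.stdBasis, Fintype.sum_prod_type,
      of_apply, ne_eq]
    rw [Finset.sum_eq_single x]
    · by_cases h : py = x
      · subst h
        fin_cases pi <;> simp [hx, Fin.sum_univ_two]
      · simp [h]
    · intro y _ hy
      simp [hy]
    · simp
  · intro hx
    subst hx
    funext p
    obtain ⟨py, pi⟩ := p
    simp only [mulVec, dotProduct, ctrlGate, kronC, _root_.stdBasis, Fintype.sum_prod_type,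
      of_apply, ne_eq]
    rw [Finset.sum_eq_single (allOnes n)]
    · by_cases h : py = allOnes n
      · subst h
        simp [Fin.sum_univ_two, mulVec, dotProduct, mul_comm]
      · simp [h]
    · intro y _ hy
      simp [hy]
    · simp
end

section
/- Quantum teleportation is correct for every input qubit: for all α, β ∈ ℂ, let ψ₃ = (H ⊗ I ⊗ I) · (U_CX ⊗ I) · ((α, β) ⊗ φ⁺) be the three-qubit state after Alice's entangling operations, where φ⁺ = (1/√2)·(e₀ ⊗ e₀ + e₁ ⊗ e₁). Then for each measurement outcome (x₁, x₂) ∈ {0,1}², applying Bob's corrections Z^{x₁}·X^{x₂} to the third-qubit residual vector w(x₁,x₂) : Fin 2 → ℂ defined by w(x₁,x₂)(j) = ψ₃(x₁, x₂, j) yields exactly (1/2)·(α, β); hence in every branch Bob recovers the input qubit (α, β). -/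
open Matrix

/-- Hadamard gate. -/
noncomputable def Hgate : Matrix (Fin 2) (Fin 2) ℂ :=
  ((Real.sqrt 2 : ℂ))⁻¹ • !![1, 1; 1, -1]

/-- NOT gate. -/
def Xgate : Matrix (Fin 2) (Fin 2) ℂ := !![0, 1; 1, 0]

/-- Phase-flip gate. -/
def Zgate : Matrix (Fin 2) (Fin 2) ℂ := !![1, 0; 0, -1]

/-- The controlled-NOT gate acting on vectors indexed by `Fin 2 × Fin 2`. -/
def UCX : Matrix (Fin 2 × Fin 2) (Fin 2 × Fin 2) ℂ :=
  Matrix.of fun p q =>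
    if p.1 = q.1 ∧ p.2 = (if q.1 = 1 then q.2 + 1 else q.2) then 1 else 0

/-- `U_CX ⊗ I`: controlled-NOT on the first two qubits of a three-qubit system. -/
def CX01 : Matrix (Fin 2 × Fin 2 × Fin 2) (Fin 2 × Fin 2 × Fin 2) ℂ :=
  Matrix.of fun p q =>
    UCX (p.1, p.2.1) (q.1, q.2.1) * (if p.2.2 = q.2.2 then 1 else 0)

/-- `H ⊗ I ⊗ I`: Hadamard on the first qubit of a three-qubit system. -/
noncomputable def H0 : Matrix (Fin 2 × Fin 2 × Fin 2) (Fin 2 × Fin 2 × Fin 2) ℂ :=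
  Matrix.of fun p q => Hgate p.1 q.1 * (if p.2 = q.2 then 1 else 0)

/-- Standard basis vectors of ℂ². -/
def e (b : Fin 2) : Fin 2 → ℂ := fun i => if i = b then 1 else 0

/-- The Bell state `|φ⁺⟩`. -/
noncomputable def bell : Fin 2 × Fin 2 → ℂ :=
  fun p => ((Real.sqrt 2 : ℂ))⁻¹ * (e 0 p.1 * e 0 p.2 + e 1 p.1 * e 1 p.2)

/-- Initial three-qubit state `(α, β) ⊗ φ⁺`. -/
noncomputable def teleportInput (α β : ℂ) : Fin 2 × Fin 2 × Fin 2 → ℂ :=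
  fun p => ![α, β] p.1 * bell p.2

/-- Quantum teleportation is correct for every input qubit: in each measurement
branch `(x₁, x₂)`, applying Bob's corrections `Z^{x₁}·X^{x₂}` to the third-qubit
residual vector yields exactly `(1/2)·(α, β)`. -/
theorem teleportation_correct (α β : ℂ) (x₁ x₂ : Fin 2) :
    ((if x₁ = 1 then Zgate else 1) * (if x₂ = 1 then Xgate else 1)).mulVec
      (fun j => H0.mulVec (CX01.mulVec (teleportInput α β)) (x₁, x₂, j)) =
    (1 / 2 : ℂ) • ![α, β] := by
  have h2 : ((Real.sqrt 2 : ℂ))⁻¹ * ((Real.sqrt 2 : ℂ))⁻¹ = (1/2 : ℂ) := by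
    rw [← mul_inv]
    norm_num [← Complex.ofReal_mul, Real.mul_self_sqrt]
  funext j
  fin_cases x₁ <;> fin_cases x₂ <;> fin_cases j <;>
    simp [mulVec, dotProduct, Fintype.sum_prod_type, Fin.sum_univ_two, H0, CX01, UCX,
      Hgate, Xgate, Zgate, teleportInput, bell, e, Fin.isValue, Matrix.one_apply] <;>
    ring_nf <;>
    simp [h2] <;> ring_nf <;>
    rw [show ((Real.sqrt 2:ℂ))⁻¹^2 = (1/2:ℂ) by rw [sq]; exact h2] <;> ring
end

section
/- For every positive integer N and every real number δ with N·|δ| ≤ 1/2, the averaged geometric sum satisfies |(1/N)·Σ_{k=0}^{N−1} e^{2πi·δ·k}|² ≥ 4/π²; that is, in quantum phase estimation with 2^n θ = a + 2^n δ where a is the nearest integer to 2^n θ, the probability amplitude of the outcome a has squared modulus at least 4/π². -/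
/-!
The sum is geometric, so its modulus is the Dirichlet kernel `|sin (π N δ)| / |sin (π δ)|`.
Since `π N |δ| ≤ π/2`, Jordan's inequality bounds the numerator below by `2 N |δ|`, while
`|sin t| ≤ |t|` bounds the denominator above by `π |δ|`; the amplitude is thus at least `2/π`.
-/

open Finset

namespace Complex

open scoped Real

theorem norm_geom_sum_exp_I_mul_ofReal (x : ℝ) (N : ℕ) (hx : exp (I * x) ≠ 1) :
    ‖∑ k ∈ range N, exp (I * x) ^ k‖ = |Real.sin (N * x / 2)| / |Real.sin (x / 2)| := by
  have hpow : exp (I * x) ^ N = exp (I * (N * x : ℝ)) := by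
    rw [← exp_nat_mul]
    push_cast
    ring_nf
  rw [geom_sum_eq hx, norm_div, hpow, norm_exp_I_mul_ofReal_sub_one,
    norm_exp_I_mul_ofReal_sub_one, norm_mul, norm_mul, mul_div_mul_left _ _ (by norm_num)]
  simp only [Real.norm_eq_abs]

theorem two_div_pi_mul_le_norm_geom_sum_exp_I_mul_ofReal (x : ℝ) (N : ℕ)
    (h : N * |x| ≤ π) : 2 / π * N ≤ ‖∑ k ∈ range N, exp (I * x) ^ k‖ := by
  have two_div_pi_le_one : 2 / π ≤ 1 := by
    rw [div_le_one Real.pi_pos]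
    linarith [Real.pi_gt_three]
  by_cases hx : exp (I * x) = 1
  · simp only [hx, one_pow, sum_const, card_range, nsmul_eq_mul, mul_one, norm_natCast]
    exact mul_le_of_le_one_left (Nat.cast_nonneg N) two_div_pi_le_one
  have hsin : 0 < |Real.sin (x / 2)| := by
    have := norm_pos_iff.mpr (sub_ne_zero.mpr hx)
    rwa [norm_exp_I_mul_ofReal_sub_one, norm_mul, Real.norm_eq_abs, abs_two,
      mul_pos_iff_of_pos_left two_pos] at this
  rw [norm_geom_sum_exp_I_mul_ofReal x N hx, le_div_iff₀ hsin]
  have hNx : |N * x / 2| ≤ π / 2 := by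
    rw [abs_div, abs_mul, Nat.abs_cast, abs_two]
    linarith
  calc 2 / π * N * |Real.sin (x / 2)| ≤ 2 / π * N * |x / 2| := by
        gcongr ?_ * ?_
        exact Real.abs_sin_le_abs
    _ = 2 / π * |N * x / 2| := by
        rw [mul_div_assoc, abs_mul (N : ℝ), Nat.abs_cast, mul_assoc]
    _ ≤ |Real.sin (N * x / 2)| := Real.mul_abs_le_abs_sin hNx

end Complex

open Complex in
/-- In quantum phase estimation, the probability amplitude of the nearest-integer
outcome has squared modulus at least `4/π²`: for `N·|δ| ≤ 1/2`,
`|(1/N)·Σ_{k<N} e^{2πiδk}|² ≥ 4/π²`. -/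
theorem qpe_success_probability (N : ℕ) (hN : 0 < N) (δ : ℝ)
    (h : (N : ℝ) * |δ| ≤ 1 / 2) :
    4 / Real.pi ^ 2 ≤
      ‖(1 / N : ℂ) *
        ∑ k ∈ Finset.range N, Complex.exp (2 * Real.pi * δ * k * Complex.I)‖ ^ 2 := by
  have hNpos : (0 : ℝ) < N := by exact_mod_cast hN
  have hsum : ∑ k ∈ range N, exp (2 * Real.pi * δ * k * I)
      = ∑ k ∈ range N, exp (I * (2 * Real.pi * δ : ℝ)) ^ k := by
    refine sum_congr rfl fun k _ => ?_
    rw [← exp_nat_mul]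
    push_cast
    ring_nf
  have hphase : N * |2 * Real.pi * δ| ≤ Real.pi := by
    rw [abs_mul, abs_of_pos Real.two_pi_pos]
    nlinarith [Real.pi_pos]
  have hamp : 2 / Real.pi ≤ ‖(1 / N : ℂ) * ∑ k ∈ range N, exp (2 * Real.pi * δ * k * I)‖ := by
    rw [hsum, norm_mul, norm_div, norm_one, norm_natCast, one_div_mul_eq_div,
      le_div_iff₀ hNpos]
    exact two_div_pi_mul_le_norm_geom_sum_exp_I_mul_ofReal _ N hphase
  calc 4 / Real.pi ^ 2 = (2 / Real.pi) ^ 2 := by ring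
    _ ≤ _ := pow_le_pow_left₀ (by positivity) hamp 2
end
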